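/- arXiv:2501.16996 — 5 statements merged into one kernel-verified Lean document; each statement's English description precedes it below -/
import Mathlib

section
/- Let k be a positive integer, σ > 0, and let Z be a random vector in ℝ^k with independent coordinates each distributed as a real Gaussian with mean 0 and variance 2σ². Then E[‖Z‖ · 1{‖Z‖ ≤ 1}] / P(‖Z‖ ≤ 1) = I1_k(σ) / I2_k(σ), where I1_k(σ) := ∫₀¹ r^k exp(−r²/(4σ²)) dr and I2_k(σ) := ∫₀¹ r^{k−1} exp(−r²/(4σ²)) dr. In other words, the conditional expectation of ‖Z‖ given the event {‖Z‖ ≤ 1} equals this ratio of integrals. -/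
/-!
The law `N(0, v I_k)` has density `(2πv)^{-k/2} e^{-‖x‖²/(2v)}`, a function of `‖x‖` alone.
Integrating a radial function in polar coordinates (`integral_fun_norm_addHaar`) therefore turns
both `E[‖Z‖; ‖Z‖ ≤ 1]` and `P(‖Z‖ ≤ 1)` into integrals over `[0, 1]` against
`r^{k-1} e^{-r²/(4σ²)} dr`, with the same constant `k · vol(B₁) · (4πσ²)^{-k/2}`, which cancels.
-/

open MeasureTheory ProbabilityTheory Real

/-- The Gaussian measure `N(0, v·I_k)` on `ℝ^k`: independent coordinates, each a real
Gaussian with mean `0` and variance `v`. -/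
noncomputable def gaussianVec (k : ℕ) (v : ℝ) : Measure (EuclideanSpace ℝ (Fin k)) :=
  (MeasureTheory.Measure.pi fun _ : Fin k => gaussianReal 0 v.toNNReal).map
    (MeasurableEquiv.toLp 2 (Fin k → ℝ))

open Set Metric Module
open scoped ENNReal NNReal

theorem MeasurableEquiv.map_withDensity_comp {α β : Type*} [MeasurableSpace α]
    [MeasurableSpace β] (e : α ≃ᵐ β) (μ : Measure α) {f : β → ℝ≥0∞} (hf : Measurable f) :
    (μ.withDensity (f ∘ e)).map e = (μ.map e).withDensity f := by
  ext s hs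
  rw [Measure.map_apply e.measurable hs, withDensity_apply _ (e.measurable hs),
    withDensity_apply _ hs, setLIntegral_map hs hf e.measurable, Function.comp_def]

theorem MeasureTheory.Measure.pi_withDensity_ofReal {ι : Type*} [Fintype ι] {α : ι → Type*}
    [∀ i, MeasurableSpace (α i)] (μ : ∀ i, Measure (α i)) [∀ i, SigmaFinite (μ i)]
    {g : ∀ i, α i → ℝ} (hg_nonneg : ∀ i x, 0 ≤ g i x) (hg_int : ∀ i, Integrable (g i) (μ i)) :
    Measure.pi (fun i => (μ i).withDensity fun x => ENNReal.ofReal (g i x)) =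
      (Measure.pi μ).withDensity fun x => ENNReal.ofReal (∏ i, g i (x i)) := by
  have := fun i => isFiniteMeasure_withDensity_ofReal (hg_int i).hasFiniteIntegral
  refine Measure.pi_eq fun s hs => ?_
  rw [withDensity_apply _ (.univ_pi hs), Measure.restrict_pi_pi,
    ← ofReal_integral_eq_lintegral_ofReal (Integrable.fintype_prod_dep fun i => (hg_int i).restrict)
      (ae_of_all _ fun x => Finset.prod_nonneg fun i _ => hg_nonneg i (x i)),
    integral_fintype_prod_eq_prod,
    ENNReal.ofReal_prod_of_nonneg fun i _ => integral_nonneg (hg_nonneg i)]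
  refine Finset.prod_congr rfl fun i _ => ?_
  rw [withDensity_apply _ (hs i),
    ofReal_integral_eq_lintegral_ofReal (hg_int i).restrict (ae_of_all _ (hg_nonneg i))]

theorem prod_gaussianPDFReal_eq {ι : Type*} [Fintype ι] (v : ℝ≥0) (x : EuclideanSpace ℝ ι) :
    ∏ i, gaussianPDFReal 0 v (x i) =
      (√(2 * π * v))⁻¹ ^ Fintype.card ι * exp (-‖x‖ ^ 2 / (2 * v)) := by
  simp only [gaussianPDFReal, sub_zero]
  rw [Finset.prod_mul_distrib, Finset.prod_const, Finset.card_univ, ← Real.exp_sum,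
    EuclideanSpace.norm_sq_eq, ← Finset.sum_div, ← Finset.sum_neg_distrib]
  simp only [Real.norm_eq_abs, sq_abs]

instance isProbabilityMeasure_gaussianVec (k : ℕ) (v : ℝ) :
    IsProbabilityMeasure (gaussianVec k v) :=
  Measure.isProbabilityMeasure_map (MeasurableEquiv.toLp 2 (Fin k → ℝ)).measurable.aemeasurable

theorem gaussianVec_eq_withDensity (k : ℕ) {v : ℝ} (hv : 0 < v) :
    gaussianVec k v = volume.withDensity fun x : EuclideanSpace ℝ (Fin k) =>
      ENNReal.ofReal ((√(2 * π * v))⁻¹ ^ k * exp (-‖x‖ ^ 2 / (2 * v))) := by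
  have hv' : v.toNNReal ≠ 0 := by simpa using hv
  have hvol : (Measure.pi fun _ : Fin k => (volume : Measure ℝ)).map
      (MeasurableEquiv.toLp 2 (Fin k → ℝ)) = volume :=
    (EuclideanSpace.volume_preserving_symm_measurableEquiv_toLp (Fin k)).symm.map_eq
  rw [gaussianVec, funext fun _ => gaussianReal_of_var_ne_zero 0 hv', gaussianPDF_def,
    Measure.pi_withDensity_ofReal _ (fun _ => gaussianPDFReal_nonneg 0 _)
      (fun _ => integrable_gaussianPDFReal 0 _), ← hvol,
    ← MeasurableEquiv.map_withDensity_comp _ _ (by fun_prop)]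
  congr 2 with y
  simp [prod_gaussianPDFReal_eq, Real.coe_toNNReal _ hv.le]

section Radial

variable {E : Type*} [NormedAddCommGroup E] [NormedSpace ℝ E] [Nontrivial E]
  [FiniteDimensional ℝ E] [MeasurableSpace E] [BorelSpace E] (μ : Measure E) [μ.IsAddHaarMeasure]
  {ρ : ℝ → ℝ}

theorem integral_comp_norm_withDensity_comp_norm (hρ : Measurable ρ) (hρ_nonneg : ∀ r, 0 ≤ ρ r)
    (g : ℝ → ℝ) :
    ∫ x, g ‖x‖ ∂μ.withDensity (fun x => ENNReal.ofReal (ρ ‖x‖)) =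
      finrank ℝ E * μ.real (ball 0 1) * ∫ r in Ioi 0, r ^ (finrank ℝ E - 1) * (ρ r * g r) := by
  rw [integral_withDensity_eq_integral_toReal_smul (by fun_prop)
    (ae_of_all _ fun _ => ENNReal.ofReal_lt_top)]
  simp only [ENNReal.toReal_ofReal (hρ_nonneg _), smul_eq_mul]
  rw [integral_fun_norm_addHaar μ (fun r => ρ r * g r), nsmul_eq_mul, smul_eq_mul, mul_assoc]
  rfl

theorem setIntegral_closedBall_comp_norm_withDensity_comp_norm (hρ : Measurable ρ)
    (hρ_nonneg : ∀ r, 0 ≤ ρ r) (g : ℝ → ℝ) {R : ℝ} (hR : 0 ≤ R) :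
    ∫ x in closedBall 0 R, g ‖x‖ ∂μ.withDensity (fun x => ENNReal.ofReal (ρ ‖x‖)) =
      finrank ℝ E * μ.real (ball 0 1) * ∫ r in 0..R, r ^ (finrank ℝ E - 1) * (ρ r * g r) := by
  have h_ball (x : E) :
      (closedBall 0 R).indicator (fun x => g ‖x‖) x = (Iic R).indicator g ‖x‖ := by
    by_cases hx : ‖x‖ ≤ R <;> simp [hx]
  have h_radial (r : ℝ) : r ^ (finrank ℝ E - 1) * (ρ r * (Iic R).indicator g r) =
      (Iic R).indicator (fun r => r ^ (finrank ℝ E - 1) * (ρ r * g r)) r := by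
    simp only [indicator_apply]; split_ifs <;> simp
  rw [← integral_indicator measurableSet_closedBall, funext h_ball,
    integral_comp_norm_withDensity_comp_norm μ hρ hρ_nonneg, funext h_radial,
    setIntegral_indicator measurableSet_Iic, Ioi_inter_Iic, intervalIntegral.integral_of_le hR]

end Radial

theorem setIntegral_closedBall_comp_norm_gaussianVec {k : ℕ} (hk : 0 < k) {v : ℝ} (hv : 0 < v)
    (g : ℝ → ℝ) {R : ℝ} (hR : 0 ≤ R) :
    ∫ x in closedBall 0 R, g ‖x‖ ∂gaussianVec k v =
      k * volume.real (ball (0 : EuclideanSpace ℝ (Fin k)) 1) * (√(2 * π * v))⁻¹ ^ k *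
        ∫ r in 0..R, r ^ (k - 1) * exp (-r ^ 2 / (2 * v)) * g r := by
  have : Nonempty (Fin k) := ⟨⟨0, hk⟩⟩
  rw [gaussianVec_eq_withDensity k hv, setIntegral_closedBall_comp_norm_withDensity_comp_norm volume
      (ρ := fun r => (√(2 * π * v))⁻¹ ^ k * exp (-r ^ 2 / (2 * v))) (by fun_prop)
      (fun _ => by positivity) g hR,
    finrank_euclideanSpace_fin, mul_assoc _ ((√(2 * π * v))⁻¹ ^ k),
    ← intervalIntegral.integral_const_mul ((√(2 * π * v))⁻¹ ^ k)]
  congr 2 with r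
  ring

theorem conditional_norm_gaussian_eq_ratio_general
    (k : ℕ) (hk : 0 < k) (σ : ℝ) (hσ : 0 < σ)
    {Ω : Type*} [MeasurableSpace Ω] (P : Measure Ω)
    (Z : Ω → EuclideanSpace ℝ (Fin k))
    (hZlaw : Measure.map Z P = gaussianVec k (2 * σ ^ 2)) :
    (∫ ω in {ω | ‖Z ω‖ ≤ 1}, ‖Z ω‖ ∂P) / (P {ω | ‖Z ω‖ ≤ 1}).toReal =
      (∫ r in (0:ℝ)..1, r ^ k * Real.exp (-r ^ 2 / (4 * σ ^ 2))) /
        (∫ r in (0:ℝ)..1, r ^ (k - 1) * Real.exp (-r ^ 2 / (4 * σ ^ 2))) := by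
  have hZ : AEMeasurable Z P := .of_map_ne_zero (hZlaw ▸ IsProbabilityMeasure.ne_zero _)
  obtain ⟨C, hC, h_law⟩ : ∃ C ≠ 0, ∀ g : ℝ → ℝ, Measurable g →
      ∫ ω in {ω | ‖Z ω‖ ≤ 1}, g ‖Z ω‖ ∂P =
        C * ∫ r in (0:ℝ)..1, r ^ (k - 1) * exp (-r ^ 2 / (4 * σ ^ 2)) * g r := by
    have h_ball : 0 < volume.real (ball (0 : EuclideanSpace ℝ (Fin k)) 1) :=
      ENNReal.toReal_pos (measure_ball_pos _ _ one_pos).ne' measure_ball_lt_top.ne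
    refine ⟨k * volume.real (ball (0 : EuclideanSpace ℝ (Fin k)) 1) *
      (√(2 * π * (2 * σ ^ 2)))⁻¹ ^ k, by positivity, fun g hg => ?_⟩
    have h_event : {ω | ‖Z ω‖ ≤ 1} = Z ⁻¹' closedBall 0 1 := by ext; simp
    rw [h_event, ← setIntegral_map (f := fun x => g ‖x‖) measurableSet_closedBall
      (hg.comp measurable_norm).aestronglyMeasurable hZ, hZlaw,
      setIntegral_closedBall_comp_norm_gaussianVec hk (by positivity) g zero_le_one,
      show 2 * (2 * σ ^ 2) = 4 * σ ^ 2 by ring]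
  have h_num : ∫ ω in {ω | ‖Z ω‖ ≤ 1}, ‖Z ω‖ ∂P =
      C * ∫ r in (0:ℝ)..1, r ^ k * exp (-r ^ 2 / (4 * σ ^ 2)) := by
    simpa only [id, mul_right_comm (_ ^ (k - 1)) (exp _), pow_sub_one_mul hk.ne']
      using h_law id measurable_id
  have h_prob : P.real {ω | ‖Z ω‖ ≤ 1} =
      C * ∫ r in (0:ℝ)..1, r ^ (k - 1) * exp (-r ^ 2 / (4 * σ ^ 2)) := by
    simpa only [mul_one, setIntegral_const, smul_eq_mul] using h_law (fun _ => 1) measurable_const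
  rw [← measureReal_def, h_num, h_prob, mul_div_mul_left _ _ hC]

/-- If `Z ~ N(0, 2σ² I_k)` in `ℝ^k`, then
`E[‖Z‖·1{‖Z‖ ≤ 1}]/P(‖Z‖ ≤ 1) = (∫₀¹ r^k e^{−r²/(4σ²)} dr)/(∫₀¹ r^{k−1} e^{−r²/(4σ²)} dr)`. -/
theorem conditional_norm_gaussian_eq_ratio
    (k : ℕ) (hk : 0 < k) (σ : ℝ) (hσ : 0 < σ)
    {Ω : Type*} [MeasurableSpace Ω] (P : Measure Ω) [IsProbabilityMeasure P]
    (Z : Ω → EuclideanSpace ℝ (Fin k)) (hZmeas : Measurable Z)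
    (hZlaw : Measure.map Z P = gaussianVec k (2 * σ ^ 2)) :
    (∫ ω in {ω | ‖Z ω‖ ≤ 1}, ‖Z ω‖ ∂P) / (P {ω | ‖Z ω‖ ≤ 1}).toReal =
      (∫ r in (0:ℝ)..1, r ^ k * Real.exp (-r ^ 2 / (4 * σ ^ 2))) /
        (∫ r in (0:ℝ)..1, r ^ (k - 1) * Real.exp (-r ^ 2 / (4 * σ ^ 2))) :=
  conditional_norm_gaussian_eq_ratio_general k hk σ hσ P Z hZlaw
end

section
/- Fix σ > 0 and for each positive integer k define I1_k(σ) := ∫₀¹ r^k exp(−r²/(4σ²)) dr. Then I1_k(σ) = exp(−1/(4σ²))/(k+1) + o(1/k) as k → ∞; that is, lim_{k→∞} k·( I1_k(σ) − exp(−1/(4σ²))/(k+1) ) = 0. Likewise, ∫₀¹ r^{k−1} exp(−r²/(4σ²)) dr = exp(−1/(4σ²))/k + o(1/k) as k → ∞. -/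
open Real Filter

/-- `I1_k(σ) := ∫₀¹ r^k exp(−r²/(4σ²)) dr`. -/
noncomputable def I1 (k : ℕ) (σ : ℝ) : ℝ :=
  ∫ r in (0:ℝ)..1, r ^ k * Real.exp (-r ^ 2 / (4 * σ ^ 2))

/-- `I2_k(σ) := ∫₀¹ r^{k−1} exp(−r²/(4σ²)) dr`. -/
noncomputable def I2 (k : ℕ) (σ : ℝ) : ℝ :=
  ∫ r in (0:ℝ)..1, r ^ (k - 1) * Real.exp (-r ^ 2 / (4 * σ ^ 2))

/-! Subtracting `f 1 / (k + 1) = ∫₀¹ r^k f(1) dr` leaves `∫₀¹ r^k (f r - f 1) dr`, which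
for `f` `K`-Lipschitz on `[0, 1]` is at most `K ∫₀¹ r^k (1 - r) dr = K / ((k + 1) (k + 2))`,
i.e. `O(1/k²)`. The Gaussian `r ↦ exp(-r²/(4σ²))` is Lipschitz on `[0, 1]` (its derivative
is bounded by `1/(2σ²)`), and `I2_k = I1_{k-1}`. -/

open Set Topology NNReal intervalIntegral

theorem lipschitzOnWith_exp_neg_sq_div {a : ℝ} (ha : 0 ≤ a) :
    LipschitzOnWith (2 / a).toNNReal (fun r => exp (-r ^ 2 / a)) (Icc 0 1) := by
  refine (convex_Icc 0 1).lipschitzOnWith_of_nnnorm_hasDerivWithin_le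
    (fun x _ => (((hasDerivAt_pow 2 x).neg.div_const a).exp).hasDerivWithinAt) ?_
  rintro x ⟨hx0, hx1⟩
  have hexp : exp (-x ^ 2 / a) ≤ 1 :=
    exp_le_one_iff.2 (div_nonpos_of_nonpos_of_nonneg (neg_nonpos.2 (sq_nonneg x)) ha)
  rw [← NNReal.coe_le_coe, coe_nnnorm, Real.coe_toNNReal _ (by positivity)]
  calc ‖exp (-x ^ 2 / a) * (-(((2 : ℕ) : ℝ) * x ^ (2 - 1)) / a)‖
      = exp (-x ^ 2 / a) * (2 * x / a) := by
        simp [abs_of_nonneg hx0, abs_of_nonneg ha]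
    _ ≤ 1 * (2 * 1 / a) := by gcongr
    _ = 2 / a := by ring

variable {f : ℝ → ℝ} {K : ℝ≥0}

theorem abs_integral_pow_mul_sub_le (hf : LipschitzOnWith K f (Icc 0 1)) (n : ℕ) :
    |(∫ r in (0 : ℝ)..1, r ^ n * f r) - f 1 / (n + 1)| ≤ K * (1 / (n + 1) - 1 / (n + 2)) := by
  have hf_cont : ContinuousOn f (uIcc 0 1) := by
    simpa [uIcc_of_le zero_le_one] using hf.continuousOn
  have hmul_cont : ContinuousOn (fun r => r ^ n * f r) (uIcc 0 1) :=
    (continuousOn_pow n).mul hf_cont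
  have hsub : (∫ r in (0 : ℝ)..1, r ^ n * f r) - f 1 / (n + 1)
      = ∫ r in (0 : ℝ)..1, r ^ n * (f r - f 1) := by
    simp_rw [mul_sub, integral_sub hmul_cont.intervalIntegrable
      ((intervalIntegrable_pow n).mul_const _), integral_mul_const, integral_pow]
    simp [div_eq_inv_mul]
  have hmoment : ∫ r in (0 : ℝ)..1, K * (r ^ n - r ^ (n + 1))
      = K * (1 / (n + 1) - 1 / (n + 2)) := by
    rw [integral_const_mul, integral_sub (intervalIntegrable_pow n) (intervalIntegrable_pow _),
      integral_pow, integral_pow]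
    push_cast
    ring_nf
  rw [hsub, ← hmoment]
  refine (abs_integral_le_integral_abs zero_le_one).trans
    (integral_mono_on zero_le_one ?_ ?_ fun r hr => ?_)
  · exact (((continuousOn_pow n).mul (hf_cont.sub continuousOn_const)).abs).intervalIntegrable
  · exact (continuous_const.mul ((continuous_pow n).sub (continuous_pow _))).intervalIntegrable _ _
  · have hlip : |f r - f 1| ≤ K * (1 - r) := by
      simpa [Real.dist_eq, abs_of_nonneg (sub_nonneg.2 hr.2), abs_sub_comm r]
        using hf.dist_le_mul r hr 1 ⟨zero_le_one, le_rfl⟩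
    rw [abs_mul, abs_of_nonneg (pow_nonneg hr.1 n), pow_succ]
    calc r ^ n * |f r - f 1| ≤ r ^ n * (K * (1 - r)) := by gcongr; exact pow_nonneg hr.1 n
      _ = K * (r ^ n - r ^ n * r) := by ring

theorem tendsto_succ_mul_integral_pow_mul_sub (hf : LipschitzOnWith K f (Icc 0 1)) :
    Tendsto
      (fun n : ℕ => ((n : ℝ) + 1) * ((∫ r in (0 : ℝ)..1, r ^ n * f r) - f 1 / (n + 1)))
      atTop (𝓝 0) := by
  refine squeeze_zero_norm (fun n => ?_) (by
    simpa using (tendsto_one_div_add_atTop_nhds_zero_nat (𝕜 := ℝ)).const_mul (K : ℝ))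
  have hn : (0 : ℝ) < n + 1 := n.cast_add_one_pos
  calc ‖((n : ℝ) + 1) * ((∫ r in (0 : ℝ)..1, r ^ n * f r) - f 1 / (n + 1))‖
      ≤ (n + 1) * (K * (1 / (n + 1) - 1 / (n + 2))) := by
        rw [norm_mul, Real.norm_of_nonneg hn.le, Real.norm_eq_abs]
        exact mul_le_mul_of_nonneg_left (abs_integral_pow_mul_sub_le hf n) hn.le
    _ = K * ((n : ℝ) + 2)⁻¹ := by field_simp; ring
    _ ≤ K * ((n : ℝ) + 1)⁻¹ := by gcongr; linarith

theorem integral_asymptotics_general (σ : ℝ) :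
    Tendsto (fun k : ℕ =>
        (k : ℝ) * (I1 k σ - Real.exp (-1 / (4 * σ ^ 2)) / ((k : ℝ) + 1)))
      atTop (nhds 0) ∧
    Tendsto (fun k : ℕ =>
        (k : ℝ) * (I2 k σ - Real.exp (-1 / (4 * σ ^ 2)) / (k : ℝ)))
      atTop (nhds 0) := by
  have h := tendsto_succ_mul_integral_pow_mul_sub
    (lipschitzOnWith_exp_neg_sq_div (by positivity : 0 ≤ 4 * σ ^ 2))
  simp only [one_pow] at h
  constructor
  · refine squeeze_zero_norm (fun k => ?_) (by simpa using h.norm)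
    rw [norm_mul, Real.norm_eq_abs, Real.norm_eq_abs, Nat.abs_cast,
      abs_of_pos (by positivity : (0 : ℝ) < k + 1), I1]
    gcongr
    linarith
  · refine (tendsto_add_atTop_iff_nat 1).1 ?_
    simpa [I2] using h

/-- `I1_k(σ) = e^{−1/(4σ²)}/(k+1) + o(1/k)` and `I2_k(σ) = e^{−1/(4σ²)}/k + o(1/k)`
as `k → ∞`. -/
theorem integral_asymptotics (σ : ℝ) (hσ : 0 < σ) :
    Tendsto (fun k : ℕ =>
        (k : ℝ) * (I1 k σ - Real.exp (-1 / (4 * σ ^ 2)) / ((k : ℝ) + 1)))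
      atTop (nhds 0) ∧
    Tendsto (fun k : ℕ =>
        (k : ℝ) * (I2 k σ - Real.exp (-1 / (4 * σ ^ 2)) / (k : ℝ)))
      atTop (nhds 0) :=
  integral_asymptotics_general σ
end

section
/- For every positive integer k and every σ > 0, ∫₀¹ r^k exp(−r²/(4σ²)) dr / ∫₀¹ r^{k−1} exp(−r²/(4σ²)) dr < k/(k+1). -/
/-!
With `s = 4σ²` and `J m = ∫₀¹ r^m e^{-r²/s} dr`, integrating `(r^{m+1} e^{-r²/s})'` over `[0, 1]` gives
`(m + 1) J m = e^{-1/s} + (2/s) J (m + 2)`. Applied at `m = k` and `m = k - 1`, the claim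
`(k + 1) J k < k J (k - 1)` reduces to `J (k + 2) < J (k + 1)`, which holds because `r^{k+2} < r^{k+1}`
on `(0, 1)`.
-/

open Real

noncomputable def gaussMoment (s : ℝ) (m : ℕ) : ℝ :=
  ∫ r in (0:ℝ)..1, r ^ m * exp (-r ^ 2 / s)

namespace gaussMoment

variable (s : ℝ)

lemma intervalIntegrable (m : ℕ) (a b : ℝ) :
    IntervalIntegrable (fun r : ℝ => r ^ m * exp (-r ^ 2 / s)) MeasureTheory.volume a b :=
  (by fun_prop : Continuous _).intervalIntegrable a b

lemma pos (m : ℕ) : 0 < gaussMoment s m := by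
  refine intervalIntegral.intervalIntegral_pos_of_pos_on
    (intervalIntegrable s m 0 1) (fun r hr => ?_) one_pos
  have := hr.1
  positivity

lemma succ_lt (m : ℕ) : gaussMoment s (m + 1) < gaussMoment s m := by
  refine intervalIntegral.integral_lt_integral_of_continuousOn_of_le_of_exists_lt one_pos
    (by fun_prop) (by fun_prop) (fun r hr => ?_) ⟨1 / 2, by norm_num, ?_⟩
  · exact mul_le_mul_of_nonneg_right (pow_le_pow_of_le_one hr.1.le hr.2 m.le_succ) (exp_pos _).le
  · exact mul_lt_mul_of_pos_right
      (pow_lt_pow_right_of_lt_one₀ (by norm_num) (by norm_num) m.lt_succ_self) (exp_pos _)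

lemma hasDerivAt_pow_succ_mul_exp (m : ℕ) (r : ℝ) :
    HasDerivAt (fun r : ℝ => r ^ (m + 1) * exp (-r ^ 2 / s))
      ((m + 1) * (r ^ m * exp (-r ^ 2 / s)) - 2 / s * (r ^ (m + 2) * exp (-r ^ 2 / s))) r := by
  have hexp : HasDerivAt (fun r : ℝ => exp (-r ^ 2 / s)) (exp (-r ^ 2 / s) * (-(2 * r) / s)) r := by
    simpa using ((hasDerivAt_pow 2 r).neg.div_const s).exp
  refine ((hasDerivAt_pow (m + 1) r).mul hexp).congr_deriv ?_
  rw [Nat.add_sub_cancel]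
  push_cast
  ring

lemma succ_mul_eq (m : ℕ) :
    (m + 1) * gaussMoment s m = exp (-1 / s) + 2 / s * gaussMoment s (m + 2) := by
  have hftc := intervalIntegral.integral_eq_sub_of_hasDerivAt
    (fun r _ => hasDerivAt_pow_succ_mul_exp s m r)
    (((intervalIntegrable s m 0 1).const_mul _).sub ((intervalIntegrable s (m + 2) 0 1).const_mul _))
  rw [intervalIntegral.integral_sub ((intervalIntegrable s m 0 1).const_mul _)
      ((intervalIntegrable s (m + 2) 0 1).const_mul _),
    intervalIntegral.integral_const_mul, intervalIntegral.integral_const_mul] at hftc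
  simp only [gaussMoment]
  norm_num at hftc
  linarith

end gaussMoment

/-- For every positive integer `k` and `σ > 0`,
`(∫₀¹ r^k e^{−r²/(4σ²)} dr)/(∫₀¹ r^{k−1} e^{−r²/(4σ²)} dr) < k/(k+1)`. -/
theorem ratio_lt (k : ℕ) (hk : 0 < k) (σ : ℝ) (hσ : 0 < σ) :
    (∫ r in (0:ℝ)..1, r ^ k * Real.exp (-r ^ 2 / (4 * σ ^ 2))) /
      (∫ r in (0:ℝ)..1, r ^ (k - 1) * Real.exp (-r ^ 2 / (4 * σ ^ 2))) <
      (k : ℝ) / ((k : ℝ) + 1) := by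
  obtain ⟨n, rfl⟩ := Nat.exists_eq_add_one_of_ne_zero hk.ne'
  set s := 4 * σ ^ 2
  change gaussMoment s (n + 1) / gaussMoment s (n + 1 - 1) < _
  rw [Nat.add_sub_cancel, div_lt_div_iff₀ (gaussMoment.pos s n) (by positivity)]
  have hrec := gaussMoment.succ_mul_eq s (n + 1)
  have hrec_pred := gaussMoment.succ_mul_eq s n
  have hdecr := mul_lt_mul_of_pos_left (gaussMoment.succ_lt s (n + 2)) (by positivity : 0 < 2 / s)
  push_cast at hrec hrec_pred ⊢
  linarith
end

section
/- Fix a positive integer k. Define, for σ > 0, I1_k(σ) := ∫₀¹ r^k exp(−r²/(4σ²)) dr and I2_k(σ) := ∫₀¹ r^{k−1} exp(−r²/(4σ²)) dr. Then lim_{σ → 0⁺} I1_k(σ)/I2_k(σ) = 0. -/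
open Real Filter

/-!
Write `g(r) = r^{k-1} e^{-r²/(4σ²)}`, so that `I1 = ∫₀¹ r g` and `I2 = ∫₀¹ g`. For `0 < a ≤ 1`,
splitting at `a` gives `I1 ≤ a I2 + ∫ₐ¹ g`. The tail is at most `e^{-a²/(4σ²)}`, while
`I2 ≥ ∫₀^{a/2} g ≥ (a/2)^k/k · e^{-a²/(16σ²)}`, so `∫ₐ¹ g / I2 = O(e^{-3a²/(16σ²)}) → 0` and
`I1/I2 < 2a` for small `σ`.
-/

open Set Topology intervalIntegral
open MeasureTheory (volume)

theorem integral_id_mul_le {g : ℝ → ℝ} (hg : Continuous g) (hg0 : ∀ r ∈ Icc (0 : ℝ) 1, 0 ≤ g r)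
    {a : ℝ} (ha : 0 ≤ a) (ha1 : a ≤ 1) :
    ∫ r in (0 : ℝ)..1, r * g r ≤ a * (∫ r in (0 : ℝ)..1, g r) + ∫ r in a..1, g r := by
  have hgi (c d : ℝ) : IntervalIntegrable g volume c d := hg.intervalIntegrable c d
  have hrgi (c d : ℝ) : IntervalIntegrable (fun r => r * g r) volume c d :=
    (continuous_id.mul hg).intervalIntegrable c d
  rw [← integral_add_adjacent_intervals (hrgi 0 a) (hrgi a 1),
    ← integral_add_adjacent_intervals (hgi 0 a) (hgi a 1)]
  have head : ∫ r in (0 : ℝ)..a, r * g r ≤ a * (∫ r in (0 : ℝ)..a, g r) := by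
    rw [← integral_const_mul]
    exact integral_mono_on ha (hrgi 0 a) ((hgi 0 a).const_mul a) fun r hr =>
      mul_le_mul_of_nonneg_right hr.2 (hg0 r ⟨hr.1, hr.2.trans ha1⟩)
  have tail : ∫ r in a..1, r * g r ≤ ∫ r in a..1, g r :=
    integral_mono_on ha1 (hrgi a 1) (hgi a 1) fun r hr =>
      mul_le_of_le_one_left (hg0 r ⟨ha.trans hr.1, hr.2⟩) hr.2
  have tail_nonneg : 0 ≤ ∫ r in a..1, g r :=
    integral_nonneg ha1 fun r hr => hg0 r ⟨ha.trans hr.1, hr.2⟩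
  linarith [mul_nonneg ha tail_nonneg]

theorem tendsto_exp_neg_div_sq_nhdsGT_zero {c : ℝ} (hc : 0 < c) :
    Tendsto (fun σ : ℝ => exp (-c / σ ^ 2)) (𝓝[>] 0) (𝓝 0) := by
  have h : Tendsto (fun σ : ℝ => c / σ ^ 2) (𝓝[>] 0) atTop := by
    simpa [div_eq_mul_inv, inv_pow] using
      ((tendsto_pow_atTop two_ne_zero).comp tendsto_inv_nhdsGT_zero).const_mul_atTop hc
  exact (tendsto_exp_atBot.comp (tendsto_neg_atTop_atBot.comp h)).congr fun σ => by
    simp [neg_div]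

noncomputable def gaussRadial (n : ℕ) (σ r : ℝ) : ℝ :=
  r ^ n * exp (-r ^ 2 / (4 * σ ^ 2))

section gaussRadial

variable (n : ℕ) (σ : ℝ)

theorem continuous_gaussRadial : Continuous (gaussRadial n σ) := by
  unfold gaussRadial
  fun_prop

theorem gaussRadial_nonneg {r : ℝ} (hr : 0 ≤ r) : 0 ≤ gaussRadial n σ r := by
  unfold gaussRadial
  positivity

theorem gaussRadial_succ (r : ℝ) : gaussRadial (n + 1) σ r = r * gaussRadial n σ r := by
  simp only [gaussRadial, pow_succ]
  ring

theorem integral_gaussRadial_pos : 0 < ∫ r in (0 : ℝ)..1, gaussRadial n σ r :=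
  intervalIntegral_pos_of_pos_on ((continuous_gaussRadial n σ).intervalIntegrable 0 1)
    (fun _ hr => mul_pos (pow_pos hr.1 n) (exp_pos _)) zero_lt_one

theorem integral_gaussRadial_tail_le {a : ℝ} (ha : 0 ≤ a) (ha1 : a ≤ 1) :
    ∫ r in a..1, gaussRadial n σ r ≤ exp (-a ^ 2 / (4 * σ ^ 2)) := by
  calc ∫ r in a..1, gaussRadial n σ r ≤ ∫ _ in a..1, exp (-a ^ 2 / (4 * σ ^ 2)) := by
        refine integral_mono_on ha1 ((continuous_gaussRadial n σ).intervalIntegrable a 1)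
          intervalIntegrable_const fun r hr => ?_
        have hr0 : 0 ≤ r := ha.trans hr.1
        calc gaussRadial n σ r ≤ 1 * exp (-a ^ 2 / (4 * σ ^ 2)) := by
              unfold gaussRadial
              gcongr
              exacts [pow_le_one₀ hr0 hr.2, hr.1]
          _ = exp (-a ^ 2 / (4 * σ ^ 2)) := one_mul _
    _ = (1 - a) * exp (-a ^ 2 / (4 * σ ^ 2)) := by simp
    _ ≤ exp (-a ^ 2 / (4 * σ ^ 2)) := mul_le_of_le_one_left (exp_pos _).le (by linarith)

theorem le_integral_gaussRadial {b : ℝ} (hb : 0 ≤ b) (hb1 : b ≤ 1) :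
    b ^ (n + 1) / (n + 1) * exp (-b ^ 2 / (4 * σ ^ 2)) ≤ ∫ r in (0 : ℝ)..1, gaussRadial n σ r := by
  have hint (c d : ℝ) : IntervalIntegrable (gaussRadial n σ) volume c d :=
    (continuous_gaussRadial n σ).intervalIntegrable c d
  calc b ^ (n + 1) / (n + 1) * exp (-b ^ 2 / (4 * σ ^ 2))
      = ∫ r in (0 : ℝ)..b, r ^ n * exp (-b ^ 2 / (4 * σ ^ 2)) := by
        rw [intervalIntegral.integral_mul_const, integral_pow, zero_pow n.succ_ne_zero, sub_zero]
    _ ≤ ∫ r in (0 : ℝ)..b, gaussRadial n σ r := by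
        refine integral_mono_on hb ((continuous_pow n).intervalIntegrable _ _ |>.mul_const _)
          (hint 0 b) fun r hr => ?_
        unfold gaussRadial
        gcongr
        exacts [pow_nonneg hr.1 n, hr.1, hr.2]
    _ ≤ ∫ r in (0 : ℝ)..1, gaussRadial n σ r := by
        rw [← integral_add_adjacent_intervals (hint 0 b) (hint b 1), le_add_iff_nonneg_right]
        exact integral_nonneg hb1 fun r hr => gaussRadial_nonneg n σ (hb.trans hr.1)

theorem integral_gaussRadial_succ_div_le {a : ℝ} (ha : 0 ≤ a) (ha1 : a ≤ 1) :
    (∫ r in (0 : ℝ)..1, gaussRadial (n + 1) σ r) / ∫ r in (0 : ℝ)..1, gaussRadial n σ r ≤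
      a + (∫ r in a..1, gaussRadial n σ r) / ∫ r in (0 : ℝ)..1, gaussRadial n σ r := by
  have hpos := integral_gaussRadial_pos n σ
  rw [div_le_iff₀ hpos, add_mul, div_mul_cancel₀ _ hpos.ne']
  simp only [gaussRadial_succ]
  exact integral_id_mul_le (continuous_gaussRadial n σ)
    (fun r hr => gaussRadial_nonneg n σ hr.1) ha ha1

end gaussRadial

theorem tendsto_integral_gaussRadial_tail_div (n : ℕ) {a : ℝ} (ha : 0 < a) (ha1 : a ≤ 1) :
    Tendsto (fun σ => (∫ r in a..1, gaussRadial n σ r) / ∫ r in (0 : ℝ)..1, gaussRadial n σ r)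
      (𝓝[>] 0) (𝓝 0) := by
  set C := (a / 2) ^ (n + 1) / (n + 1)
  have hC : 0 < C := by positivity
  have hc : 0 < 3 * a ^ 2 / 16 := by positivity
  refine squeeze_zero (fun σ => div_nonneg
      (integral_nonneg ha1 fun r hr => gaussRadial_nonneg n σ (ha.le.trans hr.1))
      (integral_gaussRadial_pos n σ).le) (fun σ => ?_)
    (by simpa using (tendsto_exp_neg_div_sq_nhdsGT_zero hc).const_mul C⁻¹)
  calc (∫ r in a..1, gaussRadial n σ r) / ∫ r in (0 : ℝ)..1, gaussRadial n σ r
      ≤ exp (-a ^ 2 / (4 * σ ^ 2)) / (C * exp (-(a / 2) ^ 2 / (4 * σ ^ 2))) :=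
        div_le_div₀ (exp_pos _).le (integral_gaussRadial_tail_le n σ ha.le ha1) (by positivity)
          (le_integral_gaussRadial n σ (by positivity) (by linarith))
    _ = C⁻¹ * exp (-(3 * a ^ 2 / 16) / σ ^ 2) := by
        rw [div_mul_eq_div_div_swap, ← exp_sub, div_eq_inv_mul]
        ring_nf

/-- For fixed `k`, `I1_k(σ)/I2_k(σ) → 0` as `σ → 0⁺`. -/
theorem ratio_tendsto_zero (k : ℕ) (hk : 0 < k) :
    Tendsto (fun σ : ℝ => I1 k σ / I2 k σ) (nhdsWithin 0 (Set.Ioi 0)) (nhds 0) := by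
  obtain ⟨n, rfl⟩ : ∃ n, k = n + 1 := ⟨k - 1, by omega⟩
  change Tendsto (fun σ : ℝ => (∫ r in (0 : ℝ)..1, gaussRadial (n + 1) σ r) /
    ∫ r in (0 : ℝ)..1, gaussRadial n σ r) _ _
  refine tendsto_order.2 ⟨fun ε hε => .of_forall fun σ => hε.trans_le ?_, fun ε hε => ?_⟩
  · exact div_nonneg (integral_nonneg zero_le_one fun r hr => gaussRadial_nonneg _ σ hr.1)
      (integral_gaussRadial_pos n σ).le
  set a := min (ε / 2) 1
  have ha : 0 < a := lt_min (half_pos hε) one_pos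
  have ha1 : a ≤ 1 := min_le_right _ _
  filter_upwards [(tendsto_integral_gaussRadial_tail_div n ha ha1).eventually
    (gt_mem_nhds (half_pos hε))] with σ hσ
  calc _ ≤ a + _ := integral_gaussRadial_succ_div_le n σ ha.le ha1
    _ < ε := by linarith [min_le_left (ε / 2) 1]
end

section
/- Let k be a positive integer and let W_1, W_2, … be i.i.d. random vectors in ℝ^k whose common distribution has a density f with respect to Lebesgue measure satisfying: f(0) > 0 and f is locally Lipschitz at the origin, i.e., there exist L > 0 and δ > 0 with |f(x) − f(0)| ≤ L‖x‖ for all ‖x‖ ≤ δ. Let M_n := min_{1≤i≤n} ‖W_i‖. Then for every r > 0, lim_{n→∞} P( n·(M_n)^k > r ) = exp( −f(0)·V_{1,k}·r ), where V_{1,k} = π^{k/2}/Γ(k/2+1) is the volume of the unit ball in ℝ^k. That is, n·(M_n)^k converges in distribution to an exponential random variable with rate f(0)·V_{1,k}. -/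
open MeasureTheory ProbabilityTheory Real Filter Topology Metric

/-!
Write `p(t) = P(‖W₁‖ ≤ t)` and `tₙ = (r/n)^(1/k)`. The event `n Mₙ^k > r` says that all of
`W₁, …, Wₙ` avoid the ball of radius `tₙ`, so by independence its probability is `(1 - p(tₙ))ⁿ`.
As `f` is continuous at `0` with `f 0 ≥ 0`, `p(t)` is asymptotic to `f 0 · V_{1,k} tᵏ` when
`t → 0⁺`; hence `n p(tₙ) → f 0 · V_{1,k} r` and `(1 - p(tₙ))ⁿ → exp (-f 0 · V_{1,k} r)`.
-/

lemma lt_ciInf_iff_of_finite {ι α : Type*} [Finite ι] [Nonempty ι]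
    [ConditionallyCompleteLinearOrder α] {f : ι → α} {a : α} :
    a < ⨅ i, f i ↔ ∀ i, a < f i := by
  refine ⟨fun h i => h.trans_le (ciInf_le (Finite.bddBelow_range f) i), fun h => ?_⟩
  obtain ⟨i, hi⟩ := exists_eq_ciInf_of_finite (f := f)
  exact hi ▸ h i

lemma lt_natCast_mul_pow_iff_rpow_inv_lt {n k : ℕ} (hn : 0 < n) (hk : 0 < k) {r m : ℝ}
    (hr : 0 ≤ r) (hm : 0 ≤ m) : r < n * m ^ k ↔ (r / n) ^ (k : ℝ)⁻¹ < m := by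
  rw [Real.rpow_inv_lt_iff_of_pos (by positivity) hm (by positivity), Real.rpow_natCast,
    div_lt_iff₀' (by positivity)]

lemma iIndepFun.measure_forall_mem_eq_pow {Ω ι E : Type*} [MeasurableSpace Ω] [MeasurableSpace E]
    [Fintype ι] {P : Measure Ω} {W : ι → Ω → E} (hindep : iIndepFun W P)
    (hmeas : ∀ i, AEMeasurable (W i) P) {μ : Measure E} (hlaw : ∀ i, P.map (W i) = μ)
    {S : Set E} (hS : MeasurableSet S) :
    P {ω | ∀ i, W i ω ∈ S} = μ S ^ Fintype.card ι := by
  have hpre : ∀ i, P (W i ⁻¹' S) = μ S := fun i => by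
    rw [← hlaw i, Measure.map_apply_of_aemeasurable (hmeas i) hS]
  rw [show {ω | ∀ i, W i ω ∈ S} = ⋂ i, W i ⁻¹' S by ext; simp,
    hindep.meas_iInter fun i => ⟨S, hS, rfl⟩, Finset.prod_congr rfl fun i _ => hpre i,
    Finset.prod_const, Finset.card_univ]

lemma iIndepFun.measureReal_lt_mul_iInf_norm_pow {Ω E : Type*} [MeasurableSpace Ω]
    [NormedAddCommGroup E] [MeasurableSpace E] [OpensMeasurableSpace E] {P : Measure Ω}
    {W : ℕ → Ω → E} (hindep : iIndepFun W P) (hmeas : ∀ i, AEMeasurable (W i) P)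
    {μ : Measure E} [IsProbabilityMeasure μ] (hlaw : ∀ i, P.map (W i) = μ) {n k : ℕ}
    (hn : 0 < n) (hk : 0 < k) {r : ℝ} (hr : 0 ≤ r) :
    P.real {ω | r < n * (⨅ i : Fin n, ‖W i ω‖) ^ k} =
      (1 - μ.real (closedBall 0 ((r / n) ^ (k : ℝ)⁻¹))) ^ n := by
  have : Nonempty (Fin n) := Fin.pos_iff_nonempty.1 hn
  have hset : {ω | r < n * (⨅ i : Fin n, ‖W i ω‖) ^ k} =
      {ω | ∀ i : Fin n, W i ω ∈ (closedBall 0 ((r / n) ^ (k : ℝ)⁻¹))ᶜ} := by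
    ext ω
    simp only [Set.mem_ofPred_eq, Set.mem_compl_iff, mem_closedBall, dist_zero_right, not_le,
      lt_natCast_mul_pow_iff_rpow_inv_lt hn hk hr (Real.iInf_nonneg fun i => norm_nonneg _),
      lt_ciInf_iff_of_finite]
  rw [measureReal_def, hset, iIndepFun.measure_forall_mem_eq_pow (W := fun i : Fin n => W i)
    (hindep.precomp Fin.val_injective) (fun i => hmeas i) (fun i => hlaw i)
    measurableSet_closedBall.compl, Fintype.card_fin, ENNReal.toReal_pow, ← measureReal_def,
    probReal_compl_eq_one_sub measurableSet_closedBall]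

lemma abs_withDensity_real_sub_le {X : Type*} [MeasurableSpace X] (ν : Measure X) {f : X → ℝ}
    {s : Set X} (hs : MeasurableSet s) (hνs : ν s ≠ ⊤) {c ε : ℝ} (hc : 0 ≤ c) (hε : 0 ≤ ε)
    (hfs : ∀ x ∈ s, |f x - c| ≤ ε) :
    |(ν.withDensity fun x => ENNReal.ofReal (f x)).real s - c * ν.real s| ≤ ε * ν.real s := by
  have hlower : ENNReal.ofReal (c - ε) * ν s ≤ ∫⁻ x in s, ENNReal.ofReal (f x) ∂ν := by
    rw [← setLIntegral_const]
    exact lintegral_mono_ae <| ae_restrict_of_forall_mem hs fun x hx =>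
      ENNReal.ofReal_le_ofReal (by linarith [(abs_le.1 (hfs x hx)).1])
  have hupper : ∫⁻ x in s, ENNReal.ofReal (f x) ∂ν ≤ ENNReal.ofReal (c + ε) * ν s := by
    rw [← setLIntegral_const]
    exact lintegral_mono_ae <| ae_restrict_of_forall_mem hs fun x hx =>
      ENNReal.ofReal_le_ofReal (by linarith [(abs_le.1 (hfs x hx)).2])
  rw [← withDensity_apply _ hs] at hlower hupper
  have hlower' := ENNReal.toReal_mono (ne_top_of_le_ne_top (by finiteness) hupper) hlower
  have hupper' := ENNReal.toReal_mono (by finiteness) hupper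
  rw [ENNReal.toReal_mul, ← measureReal_def, ← measureReal_def] at hlower' hupper'
  rw [ENNReal.toReal_ofReal (by linarith)] at hupper'
  rw [ENNReal.toReal_ofReal'] at hlower'
  have := mul_le_mul_of_nonneg_right (le_max_left (c - ε) 0) 
    (measureReal_nonneg (μ := ν) (s := s))
  rw [abs_le]
  constructor <;> linarith

lemma continuousAt_of_abs_sub_le_mul_dist {X : Type*} [PseudoMetricSpace X] {f : X → ℝ} {x₀ : X}
    {L δ : ℝ} (hδ : 0 < δ) (h : ∀ x, dist x x₀ ≤ δ → |f x - f x₀| ≤ L * dist x x₀) :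
    ContinuousAt f x₀ := by
  have hlim : Tendsto (fun x => L * dist x x₀) (𝓝 x₀) (𝓝 0) := by
    simpa using ((tendsto_id (x := 𝓝 x₀)).dist (tendsto_const_nhds (x := x₀))).const_mul L
  rw [ContinuousAt, tendsto_iff_norm_sub_tendsto_zero]
  refine squeeze_zero' (Eventually.of_forall fun _ => norm_nonneg _) ?_ hlim
  filter_upwards [closedBall_mem_nhds x₀ hδ] with x hx using h x hx

section

variable {X : Type*} [PseudoMetricSpace X] [ProperSpace X] [MeasurableSpace X]
  [OpensMeasurableSpace X] (ν : Measure X) [IsFiniteMeasureOnCompacts ν] [ν.IsOpenPosMeasure]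

lemma tendsto_withDensity_real_closedBall_div {f : X → ℝ} {x : X} (hf : ContinuousAt f x)
    (hfx : 0 ≤ f x) :
    Tendsto (fun t => (ν.withDensity fun y => ENNReal.ofReal (f y)).real (closedBall x t) /
      ν.real (closedBall x t)) (𝓝[>] 0) (𝓝 (f x)) := by
  rw [Metric.tendsto_nhds]
  intro ε hε
  obtain ⟨η, hη, hball⟩ := eventually_nhds_iff_ball.1
    (Metric.tendsto_nhds.1 hf (ε / 2) (half_pos hε))
  filter_upwards [Ioo_mem_nhdsGT hη] with t ⟨ht0, htη⟩
  have hpos : 0 < ν.real (closedBall x t) :=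
    ENNReal.toReal_pos (measure_closedBall_pos ν x ht0).ne' measure_closedBall_lt_top.ne
  have hclose := abs_withDensity_real_sub_le ν (f := f) measurableSet_closedBall
    measure_closedBall_lt_top.ne hfx (half_pos hε).le fun y hy =>
      (hball y (closedBall_subset_ball htη hy)).le
  rw [Real.dist_eq, div_sub' hpos.ne', abs_div, abs_of_pos hpos, div_lt_iff₀ hpos]
  calc _ ≤ ε / 2 * ν.real (closedBall x t) := by rwa [mul_comm (f x)] at hclose
    _ < ε * ν.real (closedBall x t) := by gcongr; exact half_lt_self hε

end

noncomputable def unitBallVolume (k : ℕ) : ℝ := π ^ ((k : ℝ) / 2) / Gamma ((k : ℝ) / 2 + 1)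

lemma EuclideanSpace.volume_real_closedBall_fin {k : ℕ} (hk : 0 < k)
    (x : EuclideanSpace ℝ (Fin k)) {t : ℝ} (ht : 0 ≤ t) :
    volume.real (closedBall x t) = t ^ k * unitBallVolume k := by
  have : Nonempty (Fin k) := ⟨⟨0, hk⟩⟩
  have hsqrt : √π ^ k = π ^ ((k : ℝ) / 2) := by
    rw [Real.sqrt_eq_rpow, ← Real.rpow_natCast, ← Real.rpow_mul pi_nonneg, one_div_mul_eq_div]
  rw [measureReal_def, EuclideanSpace.volume_closedBall, Fintype.card_fin, ENNReal.toReal_mul,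
    ENNReal.toReal_pow, ENNReal.toReal_ofReal ht, ENNReal.toReal_ofReal (by positivity), hsqrt,
    unitBallVolume]

lemma tendsto_natCast_mul_measureReal_closedBall {k : ℕ} (hk : 0 < k)
    {μ : Measure (EuclideanSpace ℝ (Fin k))} {x : EuclideanSpace ℝ (Fin k)} {c r : ℝ} (hr : 0 < r)
    (h : Tendsto (fun t => μ.real (closedBall x t) / volume.real (closedBall x t)) (𝓝[>] 0) (𝓝 c)) :
    Tendsto (fun n : ℕ => n * μ.real (closedBall x ((r / n) ^ (k : ℝ)⁻¹))) atTop
      (𝓝 (c * unitBallVolume k * r)) := by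
  set t : ℕ → ℝ := fun n => (r / n) ^ (k : ℝ)⁻¹
  have ht : Tendsto t atTop (𝓝[>] 0) := by
    refine tendsto_nhdsWithin_iff.2 ⟨?_, ?_⟩
    · have := (Real.continuousAt_rpow_const 0 (k : ℝ)⁻¹ (Or.inr (by positivity))).tendsto.comp
        (tendsto_const_div_atTop_nhds_zero_nat r)
      rwa [Real.zero_rpow (by positivity)] at this
    · filter_upwards [eventually_gt_atTop 0] with n hn
      exact Real.rpow_pos_of_pos (by positivity) _
  have hvol (n : ℕ) (hn : 0 < n) : volume.real (closedBall x (t n)) = r / n * unitBallVolume k := by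
    rw [EuclideanSpace.volume_real_closedBall_fin hk x (by positivity), ← Real.rpow_natCast,
      ← Real.rpow_mul (by positivity), inv_mul_cancel₀ (by positivity), Real.rpow_one]
  have hV : 0 < unitBallVolume k := by unfold unitBallVolume; positivity
  refine ((h.comp ht).mul_const (unitBallVolume k * r)).congr' ?_ |>.trans (by rw [mul_assoc])
  filter_upwards [eventually_gt_atTop 0] with n hn
  simp only [Function.comp_apply]
  rw [hvol n hn]
  generalize μ.real (closedBall x (t n)) = a
  field_simp

theorem min_norm_extreme_value_general
    (k : ℕ) (hk : 0 < k)
    {Ω : Type*} [MeasurableSpace Ω] (P : Measure Ω) [IsProbabilityMeasure P]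
    (W : ℕ → Ω → EuclideanSpace ℝ (Fin k))
    (hmeas : ∀ i, Measurable (W i))
    (f : EuclideanSpace ℝ (Fin k) → ℝ) (hf0 : 0 < f 0)
    (L δ : ℝ) (hδ : 0 < δ)
    (hLip : ∀ x : EuclideanSpace ℝ (Fin k), ‖x‖ ≤ δ → |f x - f 0| ≤ L * ‖x‖)
    (hlaw : ∀ i, Measure.map (W i) P =
      volume.withDensity (fun x => ENNReal.ofReal (f x)))
    (hindep : iIndepFun W P) :
    ∀ r : ℝ, 0 < r →
      Tendsto (fun n : ℕ =>
          (P {ω | (n : ℝ) * (⨅ i : Fin n, ‖W i ω‖) ^ k > r}).toReal)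
        atTop
        (nhds (Real.exp (-(f 0 * (Real.pi ^ ((k : ℝ) / 2) / Real.Gamma ((k : ℝ) / 2 + 1)) * r)))) := by
  intro r hr
  set μ := volume.withDensity fun x : EuclideanSpace ℝ (Fin k) => ENNReal.ofReal (f x)
  have : IsProbabilityMeasure μ := hlaw 0 ▸ Measure.isProbabilityMeasure_map (hmeas 0).aemeasurable
  have hcont : ContinuousAt f 0 :=
    continuousAt_of_abs_sub_le_mul_dist hδ fun x => by simpa only [dist_zero_right] using hLip x
  have hmass : Tendsto (fun n : ℕ => n * -μ.real (closedBall 0 ((r / n) ^ (k : ℝ)⁻¹))) atTop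
      (𝓝 (-(f 0 * unitBallVolume k * r))) := by
    simpa only [mul_neg] using (tendsto_natCast_mul_measureReal_closedBall hk hr
      (tendsto_withDensity_real_closedBall_div volume hcont hf0.le)).neg
  refine (Real.tendsto_one_add_pow_exp_of_tendsto hmass).congr' ?_
  filter_upwards [eventually_gt_atTop 0] with n hn
  rw [← sub_eq_add_neg]
  exact (iIndepFun.measureReal_lt_mul_iInf_norm_pow hindep (fun i => (hmeas i).aemeasurable) hlaw
    hn hk hr.le).symm

/-- Extreme-value behavior of the minimum norm of i.i.d. draws with a density that is
positive and locally Lipschitz at the origin: `n·(M_n)^k` converges in distribution to an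
exponential with rate `f(0)·V_{1,k}`, where `M_n = min_{1 ≤ i ≤ n} ‖W_i‖` and
`V_{1,k} = π^{k/2}/Γ(k/2+1)` is the volume of the unit ball in `ℝ^k`. -/
theorem min_norm_extreme_value
    (k : ℕ) (hk : 0 < k)
    {Ω : Type*} [MeasurableSpace Ω] (P : Measure Ω) [IsProbabilityMeasure P]
    (W : ℕ → Ω → EuclideanSpace ℝ (Fin k))
    (hmeas : ∀ i, Measurable (W i))
    (f : EuclideanSpace ℝ (Fin k) → ℝ) (hf : Measurable f) (hf0 : 0 < f 0)
    (L δ : ℝ) (hL : 0 < L) (hδ : 0 < δ)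
    (hLip : ∀ x : EuclideanSpace ℝ (Fin k), ‖x‖ ≤ δ → |f x - f 0| ≤ L * ‖x‖)
    (hlaw : ∀ i, Measure.map (W i) P =
      volume.withDensity (fun x => ENNReal.ofReal (f x)))
    (hindep : iIndepFun W P) :
    ∀ r : ℝ, 0 < r →
      Tendsto (fun n : ℕ =>
          (P {ω | (n : ℝ) * (⨅ i : Fin n, ‖W i ω‖) ^ k > r}).toReal)
        atTop
        (nhds (Real.exp (-(f 0 * (Real.pi ^ ((k : ℝ) / 2) / Real.Gamma ((k : ℝ) / 2 + 1)) * r)))) :=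
  min_norm_extreme_value_general k hk P W hmeas f hf0 L δ hδ hLip hlaw hindep
end
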